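/- Let (X,d) be a compact metric space and (f_n) continuous self-maps converging uniformly to f. Let x, y ∈ X and N ∈ ℕ. If limsup_{n→∞} (1/n)·#{0 ≤ i ≤ n−1 : d(f_1^i(x), f_1^i(y)) < t} > 0 for all t > 0, then limsup_{m→∞} (1/m)·#{0 ≤ i ≤ m−1 : d(f_1^{Ni}(x), f_1^{Ni}(y)) < t} > 0 for all t > 0. -/

import Mathlib

/-!
Uniform convergence of continuous maps on a compact space makes `{f n}` uniformly
equicontinuous, so two orbits that are `ξ`-close at time `i` stay `t`-close for the next `N`
steps. Each such `i` thus yields the `t`-close time `⌈i / N⌉` of the subsampled orbits, and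
each time arises from at most `N` values of `i`; the counts differ by at most a factor `N`, so
the upper densities are positive together.
-/

open Filter
open scoped Classical

variable {X : Type*}

/-- `orb f n = f_n ∘ ⋯ ∘ f_1` (0-based: `f k` is the `(k+1)`-st map). -/
def orb (f : ℕ → X → X) : ℕ → X → X
  | 0 => id
  | n + 1 => f n ∘ orb f n

open Finset

theorem TendstoUniformly.uniformEquicontinuous {α β : Type*} [PseudoMetricSpace α]
    [PseudoMetricSpace β] {F : ℕ → α → β} {G : α → β} (hF : ∀ n, UniformContinuous (F n))
    (h : TendstoUniformly F G atTop) : UniformEquicontinuous F := by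
  rw [Metric.uniformEquicontinuous_iff]
  intro ε hε
  have hG : UniformContinuous G := h.uniformContinuous (Frequently.of_forall hF)
  obtain ⟨δ₁, hδ₁, hGδ⟩ := Metric.uniformContinuous_iff.1 hG (ε / 3) (by positivity)
  obtain ⟨M, hM⟩ := eventually_atTop.1 (Metric.tendstoUniformly_iff.1 h (ε / 3) (by positivity))
  have hhead : UniformEquicontinuous fun n : Fin M => F n :=
    uniformEquicontinuous_finite.2 fun n => hF n
  obtain ⟨δ₂, hδ₂, hFδ⟩ := Metric.uniformEquicontinuous_iff.1 hhead ε hε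
  refine ⟨min δ₁ δ₂, lt_min hδ₁ hδ₂, fun a b hab n => ?_⟩
  rcases lt_or_ge n M with hn | hn
  · exact hFδ a b (hab.trans_le (min_le_right _ _)) ⟨n, hn⟩
  · calc dist (F n a) (F n b) ≤ dist (F n a) (G a) + dist (G a) (G b) + dist (G b) (F n b) :=
          dist_triangle4 _ _ _ _
      _ < ε / 3 + ε / 3 + ε / 3 := by
          rw [dist_comm (F n a)]
          gcongr
          exacts [hM n hn a, hGδ (hab.trans_le (min_le_left _ _)), hM n hn b]
      _ = ε := by ring

theorem UniformEquicontinuous.exists_dist_orb_lt [PseudoMetricSpace X] {f : ℕ → X → X}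
    (hf : UniformEquicontinuous f) {t : ℝ} (ht : 0 < t) (K : ℕ) :
    ∃ ξ > 0, ∀ i a b, dist (orb f i a) (orb f i b) < ξ →
      ∀ j, i ≤ j → j ≤ i + K → dist (orb f j a) (orb f j b) < t := by
  induction K with
  | zero =>
    refine ⟨t, ht, fun i a b hab j hij hji => ?_⟩
    obtain rfl : j = i := by omega
    exact hab
  | succ K ih =>
    obtain ⟨ξ, hξ, hξK⟩ := ih
    obtain ⟨δ, hδ, hfδ⟩ := Metric.uniformEquicontinuous_iff.1 hf ξ hξ
    refine ⟨min δ t, lt_min hδ ht, fun i a b hab j hij hji => ?_⟩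
    rcases hij.eq_or_lt with rfl | hij
    · exact hab.trans_le (min_le_right _ _)
    · have hstep : dist (orb f (i + 1) a) (orb f (i + 1) b) < ξ :=
        hfδ _ _ (hab.trans_le (min_le_left _ _)) i
      exact hξK (i + 1) a b hstep j hij (by omega)

theorem card_filter_range_le_mul_card_filter_range {P Q : ℕ → Prop} [DecidablePred P]
    [DecidablePred Q] {N : ℕ} (hN : 0 < N)
    (hPQ : ∀ i k, P i → i ≤ N * k → N * k < i + N → Q k) (n : ℕ) :
    #{i ∈ range n | P i} ≤ N * #{k ∈ range n | Q k} := by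
  -- `(i + N - 1) / N = ⌈i / N⌉`
  have hceil : ∀ i, i ≤ N * ((i + N - 1) / N) ∧ N * ((i + N - 1) / N) < i + N := by
    intro i
    have := Nat.div_add_mod (i + N - 1) N
    have := Nat.mod_lt (i + N - 1) hN
    omega
  refine card_le_mul_card_image_of_maps_to (f := fun i => (i + N - 1) / N) ?_ N ?_
  · intro i hi
    simp only [mem_filter, mem_range] at hi ⊢
    obtain ⟨hin, hPi⟩ := hi
    obtain ⟨h₁, h₂⟩ := hceil i
    refine ⟨Nat.lt_of_mul_lt_mul_left (a := N) ?_, hPQ i _ hPi h₁ h₂⟩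
    calc N * ((i + N - 1) / N) < i + N := h₂
      _ ≤ N * i + N := by gcongr; exact Nat.le_mul_of_pos_left i hN
      _ = N * (i + 1) := (mul_add_one N i).symm
      _ ≤ N * n := by gcongr; exact hin
  · intro k _
    calc #{i ∈ {i ∈ range n | P i} | (i + N - 1) / N = k}
        ≤ #(Ico (N * k + 1 - N) (N * k + 1)) := by
          refine card_le_card fun i hi => ?_
          simp only [mem_filter] at hi
          have := hceil i
          rw [hi.2] at this
          simp only [mem_Ico]
          omega
      _ ≤ N := by simp only [Nat.card_Ico]; omega

theorem Filter.limsup_pos_of_le_const_mul {α : Type*} {l : Filter α} [l.NeBot] {a b : α → ℝ}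
    {C : ℝ} (hC : 0 < C) (ha : 0 ≤ a) (hab : ∀ n, a n ≤ C * b n)
    (hb : IsBoundedUnder (· ≤ ·) l b) (h : 0 < limsup a l) : 0 < limsup b l := by
  have hfreq : ∃ᶠ n in l, limsup a l / 2 < a n :=
    frequently_lt_of_lt_limsup (isCoboundedUnder_le_of_le l ha) (by linarith)
  refine lt_of_lt_of_le (by positivity)
    (le_limsup_of_frequently_le (a := limsup a l / 2 / C) (hfreq.mono fun n hn => ?_) hb)
  rw [div_le_iff₀ (by positivity)]
  linarith [hab n]

theorem isBoundedUnder_le_card_filter_range_div (P : ℕ → Prop) [DecidablePred P] :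
    IsBoundedUnder (· ≤ ·) atTop fun n => (#{i ∈ range n | P i} : ℝ) / n :=
  isBoundedUnder_of ⟨1, fun n => div_le_one_of_le₀ (by simpa using card_filter_le (range n) P)
    n.cast_nonneg⟩

theorem stmt_6 [MetricSpace X] [CompactSpace X] (f : ℕ → X → X) (g : X → X)
    (hf : ∀ n, Continuous (f n)) (hconv : TendstoUniformly f g atTop)
    (x y : X) (N : ℕ) (hN : 0 < N)
    (h : ∀ t : ℝ, 0 < t →
      0 < limsup (fun n =>
        (((Finset.range n).filter
          (fun i => dist (orb f i x) (orb f i y) < t)).card : ℝ) / n) atTop) :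
    ∀ t : ℝ, 0 < t →
      0 < limsup (fun m =>
        (((Finset.range m).filter
          (fun i => dist (orb f (N * i) x) (orb f (N * i) y) < t)).card : ℝ) / m) atTop := by
  intro t ht
  have hequi : UniformEquicontinuous f :=
    hconv.uniformEquicontinuous fun n => CompactSpace.uniformContinuous_of_continuous (hf n)
  obtain ⟨ξ, hξ, hpersist⟩ := hequi.exists_dist_orb_lt ht N
  have hcount := card_filter_range_le_mul_card_filter_range hN
    (P := fun i => dist (orb f i x) (orb f i y) < ξ)
    (Q := fun k => dist (orb f (N * k) x) (orb f (N * k) y) < t)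
    fun i k hi h₁ h₂ => hpersist i x y hi (N * k) h₁ (by omega)
  refine limsup_pos_of_le_const_mul (Nat.cast_pos.2 hN) (fun n => by positivity) (fun n => ?_)
    (isBoundedUnder_le_card_filter_range_div _) (h ξ hξ)
  rw [mul_div_assoc']
  gcongr
  exact_mod_cast hcount n
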